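/- Let N = (V,A,c) and N' = (V,A,c') be networks on a finite set V with |V| ≥ 2, and let x* ∈ V. Assume: (a) for every y ∈ V ∖ {x*}, c'(x*,y) ≥ c(x*,y) and c'(y,x*) ≤ c(y,x*); (b) for every arc (x,y) with x ≠ x* and y ≠ x*, c'(x,y) = c(x,y). Then for every y ∈ V ∖ {x*} with φ^N_{x*y} ≥ φ^N_{yx*}, one has φ^{N'}_{x*y} ≥ φ^{N'}_{yx*}. Moreover, for every y ∈ V ∖ {x*} with φ^N_{x*y} ≥ φ^N_{yx*} such that additionally φ^N_{x*y} > φ^N_{yx*}, or c'(x*,y) > c(x*,y), or c'(y,x*) < c(y,x*), one has φ^{N'}_{x*y} > φ^{N'}_{yx*}. -/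

import Mathlib

/-- A flow from `s` to `t` in the network with capacity `c`: bounded by the
capacity on every arc and conserving flow at every vertex other than `s`, `t`. -/
def IsFlow {V : Type*} [Fintype V] [DecidableEq V]
    (c : V → V → ℕ) (s t : V) (f : V → V → ℕ) : Prop :=
  (∀ x y : V, x ≠ y → f x y ≤ c x y) ∧
  ∀ x : V, x ≠ s → x ≠ t →
    ∑ y ∈ Finset.univ.erase x, f x y = ∑ y ∈ Finset.univ.erase x, f y x

/-- The value of a flow `f` from `s`: outflow of `s` minus inflow of `s`. -/
def flowValue {V : Type*} [Fintype V] [DecidableEq V]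
    (f : V → V → ℕ) (s : V) : ℤ :=
  (∑ y ∈ Finset.univ.erase s, (f s y : ℤ)) -
    ∑ y ∈ Finset.univ.erase s, (f y s : ℤ)

/-- The maximum flow value `φ_{st}` from `s` to `t` in the network `c`. -/
noncomputable def maxFlow {V : Type*} [Fintype V] [DecidableEq V]
    (c : V → V → ℕ) (s t : V) : ℕ :=
  sSup {n : ℕ | ∃ f : V → V → ℕ, IsFlow c s t f ∧ flowValue f s = (n : ℤ)}

/-- The flow relation `𝔉(N)`: `x ⪰ y` iff `x = y` or `x ≠ y` and `φ_{xy} ≥ φ_{yx}`. -/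
def FlowRel {V : Type*} [Fintype V] [DecidableEq V]
    (c : V → V → ℕ) (x y : V) : Prop :=
  x = y ∨ (x ≠ y ∧ maxFlow c y x ≤ maxFlow c x y)

/-- A relation is complete if any two elements are comparable. -/
def CompleteRel {V : Type*} (R : V → V → Prop) : Prop :=
  ∀ x y : V, R x y ∨ R y x

/-- The strict part `S(R)` of a relation `R`. -/
def StrictPart {V : Type*} (R : V → V → Prop) (x y : V) : Prop :=
  R x y ∧ ¬ R y x

/-- A relation is quasi-transitive if its strict part is transitive. -/
def QuasiTransitive {V : Type*} (R : V → V → Prop) : Prop :=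
  Transitive (StrictPart R)

/-- The outdegree of `x` in the network `c`. -/
def outdeg {V : Type*} [Fintype V] [DecidableEq V] (c : V → V → ℕ) (x : V) : ℕ :=
  ∑ y ∈ Finset.univ.erase x, c x y

/-- The indegree of `x` in the network `c`. -/
def indeg {V : Type*} [Fintype V] [DecidableEq V] (c : V → V → ℕ) (x : V) : ℕ :=
  ∑ y ∈ Finset.univ.erase x, c y x

/-!
A maximum `x*`–`y` flow of `N` can be chosen to send nothing into `x*`. Such a flow is still
feasible in `N'`, and one can push `c'(x*,y) - c(x*,y)` more units along the arc `(x*,y)`; hence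
`φ^N_{x*y} + (c'(x*,y) - c(x*,y)) ≤ φ^{N'}_{x*y}`, and reversing all arcs gives
`φ^{N'}_{yx*} + (c(y,x*) - c'(y,x*)) ≤ φ^N_{yx*}`. Both claims follow at once.

To remove flow entering the source `s`, follow flow-carrying arcs backwards from `s`, treating
`s → t` as an extra (virtual) arc. Since `V` is finite this walk closes a cycle. Cancelling one
unit of flow along the real arcs of all cycles of the step map keeps the flow conservative and
does not lower its value, so a flow that is minimal among those of at least the same value sends
nothing into `s`.
-/

open Finset Function

section Flows

variable {V : Type*} [Fintype V] [DecidableEq V]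

lemma flowValue_eq_outdeg_sub_indeg (f : V → V → ℕ) (s : V) :
    flowValue f s = outdeg f s - indeg f s := by
  simp [flowValue, outdeg, indeg]

lemma outdeg_swap (f : V → V → ℕ) (x : V) : outdeg (swap f) x = indeg f x := rfl

lemma sum_outdeg_eq_sum_indeg (f : V → V → ℕ) : ∑ x, outdeg f x = ∑ x, indeg f x := by
  have key : ∀ g : V → V → ℕ, ∑ x, outdeg g x + ∑ x, g x x = ∑ x, ∑ y, g x y := fun g => by
    rw [← sum_add_distrib]
    exact sum_congr rfl fun x _ => sum_erase_add _ _ (mem_univ x)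
  have := key (swap f)
  rw [sum_comm] at this
  simp only [outdeg_swap, swap] at this
  linarith [key f]

lemma outdeg_add (f g : V → V → ℕ) (x : V) : outdeg (f + g) x = outdeg f x + outdeg g x :=
  sum_add_distrib

lemma indeg_add (f g : V → V → ℕ) (x : V) : indeg (f + g) x = indeg f x + indeg g x :=
  sum_add_distrib

lemma outdeg_mono {f g : V → V → ℕ} (h : f ≤ g) (x : V) : outdeg f x ≤ outdeg g x :=
  sum_le_sum fun y _ => h x y

lemma indeg_mono {f g : V → V → ℕ} (h : f ≤ g) (x : V) : indeg f x ≤ indeg g x :=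
  sum_le_sum fun y _ => h y x

lemma outdeg_sub {f g : V → V → ℕ} (h : g ≤ f) (x : V) :
    outdeg (f - g) x = outdeg f x - outdeg g x :=
  sum_tsub_distrib _ fun y _ => h x y

lemma indeg_sub {f g : V → V → ℕ} (h : g ≤ f) (x : V) :
    indeg (f - g) x = indeg f x - indeg g x :=
  sum_tsub_distrib _ fun y _ => h y x

lemma indeg_pos_iff {f : V → V → ℕ} {x : V} : 0 < indeg f x ↔ ∃ w, w ≠ x ∧ 0 < f w x := by
  simp [indeg, sum_pos_iff]

lemma flowValue_sub {f g : V → V → ℕ} (h : g ≤ f) (s : V) :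
    flowValue (f - g) s = flowValue f s - flowValue g s := by
  simp only [flowValue_eq_outdeg_sub_indeg, outdeg_sub h, indeg_sub h]
  have := outdeg_mono h s
  have := indeg_mono h s
  omega

variable {c f : V → V → ℕ} {s t : V}

lemma IsFlow.outdeg_eq_indeg (hf : IsFlow c s t f) {x : V} (hs : x ≠ s) (ht : x ≠ t) :
    outdeg f x = indeg f x :=
  hf.2 x hs ht

lemma IsFlow.flowValue_eq_indeg_sub_outdeg (hf : IsFlow c s t f) (hst : s ≠ t) :
    flowValue f s = indeg f t - outdeg f t := by
  have htot : ∑ x, ((outdeg f x : ℤ) - indeg f x) = 0 := by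
    rw [sum_sub_distrib, sub_eq_zero]
    exact_mod_cast sum_outdeg_eq_sum_indeg f
  rw [Fintype.sum_eq_add s t hst fun x hx => by rw [hf.outdeg_eq_indeg hx.1 hx.2, sub_self]]
    at htot
  rw [flowValue_eq_outdeg_sub_indeg]
  linarith

lemma IsFlow.swap (hf : IsFlow c s t f) : IsFlow (Function.swap c) t s (Function.swap f) :=
  ⟨fun x y hxy => hf.1 y x hxy.symm, fun x ht hs => (hf.2 x hs ht).symm⟩

lemma IsFlow.flowValue_swap (hf : IsFlow c s t f) (hst : s ≠ t) :
    flowValue (Function.swap f) t = flowValue f s := by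
  rw [flowValue_eq_outdeg_sub_indeg, hf.flowValue_eq_indeg_sub_outdeg hst]
  rfl

lemma IsFlow.sub (hf : IsFlow c s t f) {g : V → V → ℕ} (hg : g ≤ f)
    (hcons : ∀ x, x ≠ s → x ≠ t → outdeg g x = indeg g x) : IsFlow c s t (f - g) :=
  ⟨fun x y hxy => (Nat.sub_le _ _).trans (hf.1 x y hxy), fun x hs ht => by
    change outdeg (f - g) x = indeg (f - g) x
    rw [outdeg_sub hg, indeg_sub hg, hf.outdeg_eq_indeg hs ht, hcons x hs ht]⟩

lemma IsFlow.flowValue_le_outdeg (hf : IsFlow c s t f) : flowValue f s ≤ outdeg c s := by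
  have : outdeg f s ≤ outdeg c s := sum_le_sum fun y hy => hf.1 s y (ne_of_mem_erase hy).symm
  rw [flowValue_eq_outdeg_sub_indeg]
  omega

end Flows

section MaxFlow

variable {V : Type*} [Fintype V] [DecidableEq V] {c f : V → V → ℕ} {s t : V}

lemma bddAbove_flowValues (c : V → V → ℕ) (s t : V) :
    BddAbove {n : ℕ | ∃ f : V → V → ℕ, IsFlow c s t f ∧ flowValue f s = (n : ℤ)} :=
  ⟨outdeg c s, fun n ⟨_, hf, hn⟩ => by have := hf.flowValue_le_outdeg; omega⟩

lemma exists_isFlow_flowValue_eq_maxFlow (c : V → V → ℕ) (s t : V) :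
    ∃ f, IsFlow c s t f ∧ flowValue f s = maxFlow c s t := by
  refine Nat.sSup_mem ?_ (bddAbove_flowValues c s t)
  exact ⟨0, fun _ _ => 0, ⟨fun _ _ _ => Nat.zero_le _, fun _ _ _ => rfl⟩, by simp [flowValue]⟩

lemma IsFlow.le_maxFlow (hf : IsFlow c s t f) {n : ℕ} (hn : n ≤ flowValue f s) :
    n ≤ maxFlow c s t :=
  le_csSup_of_le (bddAbove_flowValues c s t)
    ⟨f, hf, (Int.toNat_of_nonneg (by omega)).symm⟩ (by omega)

lemma maxFlow_swap (c : V → V → ℕ) (hst : s ≠ t) :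
    maxFlow (swap c) t s = maxFlow c s t := by
  have key : ∀ (c : V → V → ℕ) (s t : V), s ≠ t →
      {n : ℕ | ∃ f, IsFlow c s t f ∧ flowValue f s = n} ⊆
        {n : ℕ | ∃ f, IsFlow (swap c) t s f ∧ flowValue f t = n} :=
    fun _ _ _ hst _ ⟨f, hf, hn⟩ => ⟨swap f, hf.swap, (hf.flowValue_swap hst).trans hn⟩
  exact congrArg sSup ((key _ t s hst.symm).antisymm (key c s t hst))

end MaxFlow

lemma Function.exists_iterate_mem_periodicPts {α : Type*} [Finite α] (f : α → α) (x : α) :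
    ∃ n, f^[n] x ∈ periodicPts f := by
  obtain ⟨m, n, hmn, h⟩ := Finite.exists_ne_map_eq_of_infinite (f^[·] x)
  wlog hlt : m < n generalizing m n
  · exact this n m hmn.symm h.symm (by omega)
  refine ⟨m, mk_mem_periodicPts (n := n - m) (by omega) ?_⟩
  rw [IsPeriodicPt, IsFixedPt, ← iterate_add_apply, Nat.sub_add_cancel hlt.le]
  exact h.symm

section CycleArcs

variable {V : Type*} (p : V → V) (t : V)

open Classical in
noncomputable def cycleArcs [DecidableEq V] (a b : V) : ℕ :=
  if b ∈ periodicPts p ∧ p b = a ∧ a ≠ b ∧ b ≠ t then 1 else 0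

lemma cycleArcs_apply_self [DecidableEq V] {b : V} (hb : b ∈ periodicPts p) (hpb : p b ≠ b)
    (hbt : b ≠ t) : cycleArcs p t (p b) b = 1 :=
  if_pos ⟨hb, rfl, hpb, hbt⟩

lemma cycleArcs_le [DecidableEq V] {f : V → V → ℕ}
    (hf : ∀ b, b ≠ t → p b ≠ b → 0 < f (p b) b) : cycleArcs p t ≤ f := by
  intro a b
  unfold cycleArcs
  split_ifs with h
  · obtain ⟨-, rfl, hab, hbt⟩ := h
    exact hf b hbt hab
  · exact Nat.zero_le _

open Classical in
lemma indeg_cycleArcs [Fintype V] [DecidableEq V] (x : V) :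
    indeg (cycleArcs p t) x = if x ∈ periodicPts p ∧ p x ≠ x ∧ x ≠ t then 1 else 0 := by
  unfold indeg cycleArcs
  split_ifs with h
  · rw [sum_eq_single_of_mem (p x) (mem_erase.2 ⟨h.2.1, mem_univ _⟩)
      fun y _ hy => if_neg fun hc => hy hc.2.1.symm]
    exact if_pos ⟨h.1, rfl, h.2.1, h.2.2⟩
  · refine sum_eq_zero fun y _ => if_neg ?_
    rintro ⟨hx, rfl, hne, hxt⟩
    exact h ⟨hx, hne, hxt⟩

lemma outdeg_cycleArcs_le_indeg [Fintype V] [DecidableEq V] {x : V} (hx : x ≠ t) :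
    outdeg (cycleArcs p t) x ≤ indeg (cycleArcs p t) x := by
  have hP := bijOn_periodicPts p
  rw [indeg_cycleArcs]
  unfold outdeg cycleArcs
  simp only [sum_boole]
  classical
  split_ifs with h
  · exact card_le_one.2 fun b hb b' hb' => by
      simp only [mem_filter] at hb hb'
      exact hP.injOn hb.2.1 hb'.2.1 (hb.2.2.1.trans hb'.2.2.1.symm)
  · rw [Nat.cast_id, Nat.le_zero, card_eq_zero, filter_eq_empty_iff]
    rintro b - ⟨hb, rfl, hne, -⟩
    exact h ⟨hP.mapsTo hb, fun hfix => hne (hP.injOn (hP.mapsTo hb) hb hfix), hx⟩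

lemma indeg_cycleArcs_le_outdeg [Fintype V] [DecidableEq V] {x : V} (hx : p t ≠ x) :
    indeg (cycleArcs p t) x ≤ outdeg (cycleArcs p t) x := by
  rw [indeg_cycleArcs]
  split_ifs with h
  · obtain ⟨hxP, hfix, -⟩ := h
    obtain ⟨b, hb, rfl⟩ := (bijOn_periodicPts p).surjOn hxP
    have hbx : p b ≠ b := fun h => hfix (congrArg p h)
    have hbt : b ≠ t := by rintro rfl; exact hx rfl
    calc 1 = cycleArcs p t (p b) b := (cycleArcs_apply_self p t hb hbx hbt).symm
      _ ≤ outdeg (cycleArcs p t) (p b) :=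
        single_le_sum (fun _ _ => Nat.zero_le _) (mem_erase.2 ⟨hbx.symm, mem_univ _⟩)
  · exact Nat.zero_le _

end CycleArcs

section Cancel

variable {V : Type*} {f : V → V → ℕ} {s t : V}

open Classical in
/-- One step backwards along an arc carrying flow into `x` (staying put if there is none);
from the sink the step takes the virtual arc `s → t`. -/
noncomputable def flowPred (f : V → V → ℕ) (s t x : V) : V :=
  if x = t then s else if h : ∃ w, w ≠ x ∧ 0 < f w x then h.choose else x

lemma flowPred_sink : flowPred f s t t = s :=
  if_pos rfl

variable [Fintype V] [DecidableEq V] {c : V → V → ℕ}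

lemma flowPred_ne_self_iff {x : V} (hx : x ≠ t) : flowPred f s t x ≠ x ↔ 0 < indeg f x := by
  rw [indeg_pos_iff]
  unfold flowPred
  rw [if_neg hx]
  split_ifs with h
  · exact iff_of_true h.choose_spec.1 h
  · exact iff_of_false (fun hx => hx rfl) h

lemma lt_flowPred {x : V} (hx : x ≠ t) (h : flowPred f s t x ≠ x) :
    0 < f (flowPred f s t x) x := by
  have hex := indeg_pos_iff.1 ((flowPred_ne_self_iff hx).1 h)
  unfold flowPred
  rw [if_neg hx, dif_pos hex]
  exact hex.choose_spec.2

lemma IsFlow.mapsTo_flowPred (hf : IsFlow c s t f) (hs : 0 < indeg f s) :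
    Set.MapsTo (flowPred f s t) {x | x = t ∨ 0 < indeg f x} {x | x = t ∨ 0 < indeg f x} := by
  rintro x hx
  by_cases hxt : x = t
  · refine Or.inr ?_
    rwa [hxt, flowPred_sink]
  set w := flowPred f s t x
  have hw : w ≠ x := (flowPred_ne_self_iff hxt).2 (hx.resolve_left hxt)
  by_cases hwt : w = t
  · exact Or.inl hwt
  by_cases hws : w = s
  · exact Or.inr (hws ▸ hs)
  refine Or.inr (hf.outdeg_eq_indeg hws hwt ▸ ?_)
  exact sum_pos_iff.2 ⟨x, mem_erase.2 ⟨hw.symm, mem_univ _⟩, lt_flowPred hxt hw⟩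

lemma IsFlow.exists_mem_periodicPts_flowPred (hf : IsFlow c s t f) (hst : s ≠ t)
    (hs : 0 < indeg f s) :
    ∃ b ∈ periodicPts (flowPred f s t), b ≠ t ∧ flowPred f s t b ≠ b := by
  obtain ⟨n, hn⟩ := exists_iterate_mem_periodicPts (flowPred f s t) s
  by_cases hnt : (flowPred f s t)^[n] s = t
  · refine ⟨s, ?_, hst, (flowPred_ne_self_iff hst).2 hs⟩
    simpa [hnt, flowPred_sink] using (bijOn_periodicPts _).mapsTo hn
  · have := ((hf.mapsTo_flowPred hs).iterate n (Or.inr hs)).resolve_left hnt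
    exact ⟨_, hn, hnt, (flowPred_ne_self_iff hnt).2 this⟩

lemma IsFlow.exists_lt_of_indeg_source_pos (hf : IsFlow c s t f) (hst : s ≠ t)
    (hs : 0 < indeg f s) :
    ∃ g, IsFlow c s t g ∧ flowValue f s ≤ flowValue g s ∧ g < f := by
  set p := flowPred f s t
  have hd : cycleArcs p t ≤ f := cycleArcs_le p t fun _ => lt_flowPred
  have hout (x : V) (hx : x ≠ t) := outdeg_cycleArcs_le_indeg p t hx
  refine ⟨f - cycleArcs p t, hf.sub hd fun x hxs hxt => ?_, ?_, ?_⟩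
  · exact (hout x hxt).antisymm
      (indeg_cycleArcs_le_outdeg p t (by rwa [show p t = s from flowPred_sink, ne_comm]))
  · rw [flowValue_sub hd, flowValue_eq_outdeg_sub_indeg (cycleArcs p t)]
    have := hout s hst
    omega
  · obtain ⟨b, hbP, hbt, hpb⟩ := hf.exists_mem_periodicPts_flowPred hst hs
    refine lt_of_le_of_ne (fun a b => Nat.sub_le _ _) fun h => ?_
    have h1 := congrFun (congrFun h (p b)) b
    have h2 : 0 < f (p b) b := lt_flowPred hbt hpb
    rw [Pi.sub_apply, Pi.sub_apply, cycleArcs_apply_self p t hbP hpb hbt] at h1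
    omega

lemma IsFlow.exists_indeg_source_eq_zero (hf : IsFlow c s t f) (hst : s ≠ t) :
    ∃ g, IsFlow c s t g ∧ flowValue f s ≤ flowValue g s ∧ indeg g s = 0 := by
  obtain ⟨g, ⟨hg, hfg⟩, hmin⟩ := wellFounded_lt.has_min
    {g | IsFlow c s t g ∧ flowValue f s ≤ flowValue g s} ⟨f, hf, le_rfl⟩
  refine ⟨g, hg, hfg, Nat.eq_zero_of_not_pos fun hpos => ?_⟩
  obtain ⟨g', hg', hgg', hlt⟩ := hg.exists_lt_of_indeg_source_pos hst hpos
  exact hmin g' ⟨hg', hfg.trans hgg'⟩ hlt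

end Cancel

section Augment

variable {V : Type*} [Fintype V] [DecidableEq V]

lemma outdeg_single {s t : V} (hst : s ≠ t) (δ : ℕ) (x : V) :
    outdeg (Pi.single s (Pi.single t δ)) x = if x = s then δ else 0 := by
  by_cases hx : x = s
  · subst hx
    simp [outdeg, Pi.single_apply, hst.symm]
  · simp [outdeg, hx]

lemma indeg_single {s t : V} (hst : s ≠ t) (δ : ℕ) (x : V) :
    indeg (Pi.single s (Pi.single t δ)) x = if x = t then δ else 0 := by
  by_cases hx : x = t
  · subst hx
    simp [indeg, Pi.single_apply, ite_apply, hst]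
  · simp [indeg, Pi.single_apply, ite_apply, hx]

lemma maxFlow_add_le {c₁ c₂ : V → V → ℕ} {s t : V} (hst : s ≠ t)
    (hle : ∀ a b, a ≠ b → b ≠ s → c₁ a b ≤ c₂ a b) :
    maxFlow c₁ s t + (c₂ s t - c₁ s t) ≤ maxFlow c₂ s t := by
  obtain ⟨f, hf, hfv⟩ := exists_isFlow_flowValue_eq_maxFlow c₁ s t
  obtain ⟨g, hg, hfg, hgs⟩ := hf.exists_indeg_source_eq_zero hst
  set δ := c₂ s t - c₁ s t
  set e : V → V → ℕ := Pi.single s (Pi.single t δ)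
  have hflow : IsFlow c₂ s t (g + e) := by
    refine ⟨fun a b hab => ?_, fun x hxs hxt => ?_⟩
    · have hga := hg.1 a b hab
      simp only [Pi.add_apply, e, Pi.single_apply, ite_apply, Pi.zero_apply]
      by_cases hbs : b = s
      · subst hbs
        rw [sum_eq_zero_iff.1 hgs a (mem_erase.2 ⟨hab, mem_univ _⟩), if_neg hst]
        simp
      · have hc := hle a b hab hbs
        split_ifs with has hbt
        · subst has hbt
          omega
        all_goals omega
    · change outdeg (g + e) x = indeg (g + e) x
      rw [outdeg_add, indeg_add, outdeg_single hst, indeg_single hst, if_neg hxs, if_neg hxt,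
        hg.outdeg_eq_indeg hxs hxt]
  refine hflow.le_maxFlow ?_
  rw [flowValue_eq_outdeg_sub_indeg, outdeg_add, indeg_add, outdeg_single hst, indeg_single hst,
    if_pos rfl, if_neg hst, hgs]
  rw [hfv, flowValue_eq_outdeg_sub_indeg, hgs] at hfg
  push_cast
  omega

end Augment

theorem stmt10_general {V : Type*} [Fintype V] [DecidableEq V]
    (c c' : V → V → ℕ) (x' : V)
    (ha : ∀ y : V, y ≠ x' → c x' y ≤ c' x' y ∧ c' y x' ≤ c y x')
    (hb : ∀ x y : V, x ≠ y → x ≠ x' → y ≠ x' → c' x y = c x y) :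
    (∀ y : V, y ≠ x' → maxFlow c y x' ≤ maxFlow c x' y →
      maxFlow c' y x' ≤ maxFlow c' x' y) ∧
    (∀ y : V, y ≠ x' → maxFlow c y x' ≤ maxFlow c x' y →
      (maxFlow c y x' < maxFlow c x' y ∨ c x' y < c' x' y ∨
        c' y x' < c y x') →
      maxFlow c' y x' < maxFlow c' x' y) := by
  have gain (y : V) (hy : y ≠ x') : maxFlow c x' y + (c' x' y - c x' y) ≤ maxFlow c' x' y := by
    refine maxFlow_add_le hy.symm fun a b hab hbx => ?_
    by_cases hax : a = x'
    · exact hax ▸ (ha b hbx).1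
    · exact (hb a b hab hax hbx).ge
  have loss (y : V) (hy : y ≠ x') : maxFlow c' y x' + (c y x' - c' y x') ≤ maxFlow c y x' := by
    have := maxFlow_add_le (c₁ := swap c') (c₂ := swap c) hy.symm
      fun a b hab hbx => by
        by_cases hax : a = x'
        · exact hax ▸ (ha b hbx).2
        · exact (hb b a hab.symm hbx hax).le
    rwa [maxFlow_swap c' hy, maxFlow_swap c hy] at this
  refine ⟨fun y hy hle => ?_, fun y hy hle hlt => ?_⟩ <;>
  · have := gain y hy
    have := loss y hy
    omega

/-- Monotonicity: improving the results of `x*` (and changing nothing else)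
preserves, and under strictness improves, the flow comparisons of `x*` with
other vertices. -/
theorem stmt10 {V : Type*} [Fintype V] [DecidableEq V]
    (hV : 2 ≤ Fintype.card V) (c c' : V → V → ℕ) (x' : V)
    (ha : ∀ y : V, y ≠ x' → c x' y ≤ c' x' y ∧ c' y x' ≤ c y x')
    (hb : ∀ x y : V, x ≠ y → x ≠ x' → y ≠ x' → c' x y = c x y) :
    (∀ y : V, y ≠ x' → maxFlow c y x' ≤ maxFlow c x' y →
      maxFlow c' y x' ≤ maxFlow c' x' y) ∧
    (∀ y : V, y ≠ x' → maxFlow c y x' ≤ maxFlow c x' y →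
      (maxFlow c y x' < maxFlow c x' y ∨ c x' y < c' x' y ∨
        c' y x' < c y x') →
      maxFlow c' y x' < maxFlow c' x' y) :=
  stmt10_general c c' x' ha hb
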